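/- The map κ = P ∘ κ_0, where κ_0(r,y) = y + u + (−(1/2)f(y,y) + ri)x and P : Q → Q/C* is the projection, is injective on R × M_u. -/

import Mathlib

open Complex Finset ComplexConjugate

/-- The standard pseudo-Hermitian form of signature `(p,q)` on `ℂ^(p+q)`. -/
noncomputable def hform (p q : ℕ) (u v : Fin (p + q) → ℂ) : ℂ :=
  ∑ j : Fin (p + q), (if (j : ℕ) < p then (1 : ℂ) else -1) * u j * conj (v j)

/-- The map `κ₀(r,y) = y + u + (-(1/2)f(y,y) + ri)·x`. -/
noncomputable def kappa0 (p q : ℕ) (x u : Fin (p + q) → ℂ) (r : ℝ)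
    (y : Fin (p + q) → ℂ) : Fin (p + q) → ℂ :=
  y + u + (-(1 / 2) * hform p q y y + r * Complex.I) • x

/-
Pairing `κ₀(r,y)` with `x` gives `f(u,x)` whatever `(r,y)` is, which forces the scalar to be
`1`. Pairing with `u` then recovers the coefficient `-(1/2)f(y,y) + ri` of `x`; subtracting,
`y` is determined, and `r` is the imaginary part of that coefficient.
-/

section Hform

variable {p q : ℕ}

lemma hform_add_left (v w z : Fin (p + q) → ℂ) :
    hform p q (v + w) z = hform p q v z + hform p q w z := by
  simp only [hform, Pi.add_apply, ← Finset.sum_add_distrib]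
  exact Finset.sum_congr rfl fun _ _ => by ring

lemma hform_smul_left (s : ℂ) (v z : Fin (p + q) → ℂ) :
    hform p q (s • v) z = s * hform p q v z := by
  simp only [hform, Pi.smul_apply, smul_eq_mul, Finset.mul_sum]
  exact Finset.sum_congr rfl fun _ _ => by ring

lemma hform_conj_symm (v w : Fin (p + q) → ℂ) :
    conj (hform p q w v) = hform p q v w := by
  rw [hform, map_sum]
  refine Finset.sum_congr rfl fun j _ => ?_
  by_cases hj : (j : ℕ) < p <;> simp [hj] <;> ring

end Hform

section Kappa0

variable {p q : ℕ} {x u : Fin (p + q) → ℂ}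

lemma hform_kappa0_left (r : ℝ) (y z : Fin (p + q) → ℂ) :
    hform p q (kappa0 p q x u r y) z = hform p q y z + hform p q u z +
      (-(1 / 2) * hform p q y y + r * I) * hform p q x z := by
  rw [kappa0, hform_add_left, hform_add_left, hform_smul_left]

lemma hform_kappa0_left_self (hxQ : hform p q x x = 0) {r : ℝ} {y : Fin (p + q) → ℂ}
    (hyx : hform p q y x = 0) :
    hform p q (kappa0 p q x u r y) x = hform p q u x := by
  rw [hform_kappa0_left, hyx, hxQ]
  ring

lemma eq_one_of_kappa0_eq_smul (hxQ : hform p q x x = 0) (hux : hform p q u x ≠ 0)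
    {r r' : ℝ} {y y' : Fin (p + q) → ℂ} (hyx : hform p q y x = 0)
    (hyx' : hform p q y' x = 0) {c : ℂ}
    (h : kappa0 p q x u r' y' = c • kappa0 p q x u r y) : c = 1 := by
  have hpair := congrArg (hform p q · x) h
  simp only [hform_smul_left, hform_kappa0_left_self hxQ hyx,
    hform_kappa0_left_self hxQ hyx'] at hpair
  exact (mul_eq_right₀ hux).1 hpair.symm

lemma kappa0_injective (hux : hform p q u x ≠ 0) {r r' : ℝ} {y y' : Fin (p + q) → ℂ}
    (hyu : hform p q y u = 0) (hyu' : hform p q y' u = 0)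
    (h : kappa0 p q x u r' y' = kappa0 p q x u r y) : r = r' ∧ y = y' := by
  have hxu : hform p q x u ≠ 0 := by
    rwa [← hform_conj_symm, map_ne_zero]
  have hcoeff : -(1 / 2) * hform p q y' y' + r' * I = -(1 / 2) * hform p q y y + r * I := by
    have hpair := congrArg (hform p q · u) h
    simp only [hform_kappa0_left, hyu, hyu', zero_add, add_right_inj] at hpair
    exact mul_right_cancel₀ hxu hpair
  have hy : y' = y := by
    rw [kappa0, kappa0, hcoeff] at h
    exact add_right_cancel (add_right_cancel h)
  subst hy
  have hr : (r' : ℂ) * I = r * I := add_left_cancel hcoeff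
  exact ⟨by exact_mod_cast (mul_right_cancel₀ I_ne_zero hr).symm, rfl⟩

end Kappa0

theorem kappa_injective_general (p q : ℕ)
    (x u : Fin (p + q) → ℂ) (hxQ : hform p q x x = 0)
    (hux : hform p q u x = 1)
    (r r' : ℝ) (y y' : Fin (p + q) → ℂ)
    (hyx : hform p q y x = 0) (hyu : hform p q y u = 0)
    (hyx' : hform p q y' x = 0) (hyu' : hform p q y' u = 0)
    (c : ℂ)
    (h : kappa0 p q x u r' y' = c • kappa0 p q x u r y) :
    r = r' ∧ y = y' := by
  have hux0 : hform p q u x ≠ 0 := by simp [hux]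
  obtain rfl : c = 1 := eq_one_of_kappa0_eq_smul hxQ hux0 hyx hyx' h
  rw [one_smul] at h
  exact kappa0_injective hux0 hyu hyu' h

/-- The map `κ = P ∘ κ₀ : ℝ × M_u → Q̃ = Q/ℂ*` is injective: if `κ₀(r',y')` is a
nonzero complex multiple of `κ₀(r,y)` then `r = r'` and `y = y'`. -/
theorem kappa_injective (p q : ℕ) (hp : 1 ≤ p) (hq : 1 ≤ q)
    (x u : Fin (p + q) → ℂ) (hx : x ≠ 0) (hxQ : hform p q x x = 0)
    (hu : u ≠ 0) (huQ : hform p q u u = 0) (hux : hform p q u x = 1)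
    (r r' : ℝ) (y y' : Fin (p + q) → ℂ)
    (hyx : hform p q y x = 0) (hyu : hform p q y u = 0)
    (hyx' : hform p q y' x = 0) (hyu' : hform p q y' u = 0)
    (c : ℂ) (hc : c ≠ 0)
    (h : kappa0 p q x u r' y' = c • kappa0 p q x u r y) :
    r = r' ∧ y = y' :=
  kappa_injective_general p q x u hxQ hux r r' y y' hyx hyu hyx' hyu' c h
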